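/- arXiv:1912.05573 — 6 statements merged into one kernel-verified Lean document; each statement's English description precedes it below -/
import Mathlib

section
/- Let $\Theta$ be a $p\times p$ positive definite matrix partitioned by disjoint sets $A,B,C$ covering $\{1,\dots,p\}$, with $\Sigma = \Theta^{-1}$. Define $O = ((A\cup B)\times(A\cup B)) \cup ((B\cup C)\times(B\cup C))$, i.e. $O^c = (A\times C)\cup(C\times A)$. Let $\tilde\Theta$ be the unique positive definite matrix with $\tilde\Theta_{AC} = 0$ and $[\tilde\Theta^{-1}]_{O} = \Sigma_O$ (the maximum-determinant completion). Then $\tilde\Theta_{AA} = \Theta_{AA} - \Theta_{AC}\Theta_{CC}^{-1}\Theta_{CA}$, $\tilde\Theta_{AB} = \Theta_{AB} - \Theta_{AC}\Theta_{CC}^{-1}\Theta_{CB}$, $\tilde\Theta_{BC} = \Theta_{BC} - \Theta_{BA}\Theta_{AA}^{-1}\Theta_{AC}$, and $\tilde\Theta_{CC} = \Theta_{CC} - \Theta_{CA}\Theta_{AA}^{-1}\Theta_{AC}$. -/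
/-!
For invertible `M` and a partition `E ⊔ F` of the indices, the Schur complement
`M_EE - M_EF M_FF⁻¹ M_FE` is the inverse of the block `(M⁻¹)_EE`. Since `Θ'⁻¹` and `Θ⁻¹` agree
on `(A ∪ B) × (A ∪ B)`, the Schur complements of `C` in `Θ'` and `Θ` coincide there, and because
`Θ'_AC = 0` the Schur complement of `C` in `Θ'` is just `Θ'` on the rows in `A`. This gives the
`AA` and `AB` blocks; eliminating `A` on `(B ∪ C) × (B ∪ C)` gives the `BC` and `CC` blocks.
-/

open Matrix

/-- The submatrix of a `p×p` matrix with rows indexed by `E` and columns by `F`. -/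
def msub {p : ℕ} (M : Matrix (Fin p) (Fin p) ℝ) (E F : Finset (Fin p)) :
    Matrix ↥E ↥F ℝ :=
  M.submatrix (fun i => (i : Fin p)) (fun j => (j : Fin p))

namespace Matrix

variable {l o n R : Type*} [DecidableEq n] [CommRing R]

-- `M⟦E, F⟧` is `msub M E F` over an arbitrary index type and ring.
local notation M "⟦" E ", " F "⟧" => Matrix.submatrix M ((↑) : E → _) ((↑) : F → _)

theorem submatrix_mul_eq_add_of_isCompl [Fintype n] (M N : Matrix n n R) {E F : Finset n}
    (hEF : IsCompl E F) (r : l → n) (c : o → n) :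
    (M * N).submatrix r c =
      M.submatrix r ((↑) : E → n) * N.submatrix ((↑) : E → n) c +
        M.submatrix r ((↑) : F → n) * N.submatrix ((↑) : F → n) c := by
  obtain rfl := hEF.compl_eq
  ext i j
  simp only [submatrix_apply, mul_apply, add_apply,
    Finset.sum_coe_sort E (fun k => M (r i) k * N k (c j)),
    Finset.sum_coe_sort Eᶜ (fun k => M (r i) k * N k (c j)), Finset.sum_add_sum_compl]

theorem one_submatrix_eq_zero_of_disjoint {E F : Finset n} (hEF : Disjoint E F) :
    (1 : Matrix n n R)⟦E, F⟧ = 0 := by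
  ext i j
  exact one_apply_ne fun hij => Finset.disjoint_left.1 hEF i.2 (hij ▸ j.2)

noncomputable def schurCompl (M : Matrix n n R) (F G H : Finset n) : Matrix G H R :=
  M⟦G, H⟧ - M⟦G, F⟧ * (M⟦F, F⟧)⁻¹ * M⟦F, H⟧

theorem schurCompl_eq_inv_submatrix_inv [Fintype n] {M : Matrix n n R} {E F : Finset n}
    (hM : IsUnit M) (hMF : IsUnit (M⟦F, F⟧)) (hEF : IsCompl E F) :
    schurCompl M F E E = (M⁻¹⟦E, E⟧)⁻¹ := by
  rw [isUnit_iff_isUnit_det] at hM hMF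
  have hMM : M * M⁻¹ = 1 := mul_nonsing_inv M hM
  have hE : M⟦E, E⟧ * M⁻¹⟦E, E⟧ + M⟦E, F⟧ * M⁻¹⟦F, E⟧ = 1 := by
    rw [← submatrix_mul_eq_add_of_isCompl _ _ hEF, hMM, submatrix_one _ Subtype.val_injective]
  have hF : M⟦F, E⟧ * M⁻¹⟦E, E⟧ + M⟦F, F⟧ * M⁻¹⟦F, E⟧ = 0 := by
    rw [← submatrix_mul_eq_add_of_isCompl _ _ hEF, hMM,
      one_submatrix_eq_zero_of_disjoint hEF.disjoint.symm]
  have hFE : M⁻¹⟦F, E⟧ = -((M⟦F, F⟧)⁻¹ * M⟦F, E⟧ * M⁻¹⟦E, E⟧) := by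
    refine eq_neg_of_add_eq_zero_right ?_
    rw [Matrix.mul_assoc, ← nonsing_inv_mul_cancel_left _ (M⁻¹⟦F, E⟧) hMF, ← Matrix.mul_add,
      hF, Matrix.mul_zero]
  refine (inv_eq_left_inv ?_).symm
  rw [schurCompl, Matrix.sub_mul, ← hE, hFE]
  simp only [Matrix.mul_neg, Matrix.mul_assoc]
  abel

theorem schurCompl_eq_of_subset {M N : Matrix n n R} {E F G H : Finset n}
    (h : schurCompl M F E E = schurCompl N F E E) (hG : G ⊆ E) (hH : H ⊆ E) :
    schurCompl M F G H = schurCompl N F G H := by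
  ext i j
  exact congr_fun₂ h ⟨i, hG i.2⟩ ⟨j, hH j.2⟩

theorem schurCompl_of_left_eq_zero {M : Matrix n n R} {F G H : Finset n} (h : M⟦G, F⟧ = 0) :
    schurCompl M F G H = M⟦G, H⟧ := by
  rw [schurCompl, h, Matrix.zero_mul, Matrix.zero_mul, sub_zero]

theorem schurCompl_of_right_eq_zero {M : Matrix n n R} {F G H : Finset n} (h : M⟦F, H⟧ = 0) :
    schurCompl M F G H = M⟦G, H⟧ := by
  rw [schurCompl, h, Matrix.mul_zero, sub_zero]

end Matrix

/-- Let `Θ ≻ 0` be partitioned by disjoint sets `A, B, C` covering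
`{1,…,p}`, `Σ = Θ⁻¹`, and `O^c = (A×C) ∪ (C×A)`.  If `Θ'` is a positive definite
matrix with `Θ'_{AC} = 0`, `Θ'_{CA} = 0`, whose inverse agrees with `Σ` on `O`
(the maximum-determinant completion), then
`Θ'_{AA} = Θ_{AA} - Θ_{AC}Θ_{CC}⁻¹Θ_{CA}`, `Θ'_{AB} = Θ_{AB} - Θ_{AC}Θ_{CC}⁻¹Θ_{CB}`,
`Θ'_{BC} = Θ_{BC} - Θ_{BA}Θ_{AA}⁻¹Θ_{AC}`, and
`Θ'_{CC} = Θ_{CC} - Θ_{CA}Θ_{AA}⁻¹Θ_{AC}`. -/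
theorem madgq_blocks (p : ℕ) (Θ Θ' : Matrix (Fin p) (Fin p) ℝ)
    (hΘ : Θ.PosDef) (hΘ' : Θ'.PosDef) (A B C : Finset (Fin p))
    (hAB : Disjoint A B) (hAC : Disjoint A C) (hBC : Disjoint B C)
    (hcover : A ∪ B ∪ C = Finset.univ)
    (hz1 : ∀ i ∈ A, ∀ j ∈ C, Θ' i j = 0)
    (hz2 : ∀ i ∈ C, ∀ j ∈ A, Θ' i j = 0)
    (hagree : ∀ i j : Fin p, ¬((i ∈ A ∧ j ∈ C) ∨ (i ∈ C ∧ j ∈ A)) →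
      Θ'⁻¹ i j = Θ⁻¹ i j) :
    msub Θ' A A = msub Θ A A - msub Θ A C * (msub Θ C C)⁻¹ * msub Θ C A ∧
    msub Θ' A B = msub Θ A B - msub Θ A C * (msub Θ C C)⁻¹ * msub Θ C B ∧
    msub Θ' B C = msub Θ B C - msub Θ B A * (msub Θ A A)⁻¹ * msub Θ A C ∧
    msub Θ' C C = msub Θ C C - msub Θ C A * (msub Θ A A)⁻¹ * msub Θ A C := by
  have hABC : IsCompl (A ∪ B) C :=
    ⟨Finset.disjoint_union_left.2 ⟨hAC, hBC⟩, codisjoint_iff.2 hcover⟩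
  have hBCA : IsCompl (B ∪ C) A :=
    ⟨(Finset.disjoint_union_right.2 ⟨hAB, hAC⟩).symm,
      codisjoint_iff.2 (by rw [Finset.sup_eq_union, Finset.top_eq_univ, ← hcover]; ac_rfl)⟩
  have schur_eq {E F : Finset (Fin p)} (hEF : IsCompl E F) (hF : F = A ∨ F = C) :
      schurCompl Θ' F E E = schurCompl Θ F E E := by
    have hinv : msub Θ'⁻¹ E E = msub Θ⁻¹ E E := by
      ext i j
      refine hagree i j ?_
      have := hEF.disjoint
      rcases hF with rfl | rfl <;> simp_all [Finset.disjoint_left]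
    rw [schurCompl_eq_inv_submatrix_inv hΘ'.isUnit
        (hΘ'.submatrix Subtype.val_injective).isUnit hEF,
      schurCompl_eq_inv_submatrix_inv hΘ.isUnit (hΘ.submatrix Subtype.val_injective).isUnit hEF]
    exact congrArg _ hinv
  have hΘ'AC : msub Θ' A C = 0 := by ext i j; exact hz1 i i.2 j j.2
  have hΘ'CA : msub Θ' C A = 0 := by ext i j; exact hz2 i i.2 j j.2
  have hA : A ⊆ A ∪ B := Finset.subset_union_left
  have hB : B ⊆ A ∪ B := Finset.subset_union_right
  have hB' : B ⊆ B ∪ C := Finset.subset_union_left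
  have hC : C ⊆ B ∪ C := Finset.subset_union_right
  refine ⟨?_, ?_, ?_, ?_⟩
  · exact (schurCompl_of_left_eq_zero hΘ'AC).symm.trans
      (schurCompl_eq_of_subset (schur_eq hABC (.inr rfl)) hA hA)
  · exact (schurCompl_of_left_eq_zero hΘ'AC).symm.trans
      (schurCompl_eq_of_subset (schur_eq hABC (.inr rfl)) hA hB)
  · exact (schurCompl_of_right_eq_zero hΘ'AC).symm.trans
      (schurCompl_eq_of_subset (schur_eq hBCA (.inl rfl)) hB' hC)
  · exact (schurCompl_of_left_eq_zero hΘ'CA).symm.trans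
      (schurCompl_eq_of_subset (schur_eq hBCA (.inl rfl)) hC hC)
end

section
/- In the setting of the block completion with $O^c = (A\times C)\cup(C\times A)$: for every $i \in A\cup C$, the maximum-determinant completion satisfies $\tilde\Theta_{ii} \leq \Theta_{ii}$, with strict inequality for $i \in A$ if and only if the row $\Theta_{iC}$ is nonzero, and for $j \in C$ if and only if the column $\Theta_{Aj}$ is nonzero. -/
open Matrix

/-! With `E = Θ'⁻¹ - Θ⁻¹` one has `Θ - Θ' = Θ' E Θ`. For `i ∈ A` the row `w = (Θ' E)ᵢ` is
supported on `C`, since `Θ'ᵢ_C = 0` and `E` vanishes on `Cᶜ × Cᶜ`. Reading row `i` on `C`, where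
`Θ'` vanishes, gives `Θᵢ_C = (wᵀ Θ)_C`, hence `Θᵢᵢ - Θ'ᵢᵢ = wᵀ Θ w ≥ 0`, with equality iff
`w = 0` iff `Θᵢ_C = 0`. The case `j ∈ C` is the same with `A` and `C` exchanged. -/

namespace Matrix

variable {n : Type*} [Fintype n] [DecidableEq n]

theorem sub_eq_mul_inv_sub_inv_mul {R : Type*} [CommRing R] {M N : Matrix n n R}
    (hM : IsUnit M.det) (hN : IsUnit N.det) : M - N = N * (N⁻¹ - M⁻¹) * M := by
  rw [Matrix.mul_sub, Matrix.sub_mul, mul_nonsing_inv _ hN, Matrix.one_mul, Matrix.mul_assoc,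
    nonsing_inv_mul _ hM, Matrix.mul_one]

theorem vecMul_dotProduct_eq_mulVec_apply {Θ Θ' : Matrix n n ℝ} {C : Finset n} {i : n}
    {w : n → ℝ} (hw : ∀ l ∉ C, w l = 0) (hrow : ∀ j ∈ C, Θ' i j = 0)
    (hdiff : ∀ j, Θ i j - Θ' i j = (w ᵥ* Θ) j) :
    (w ᵥ* Θ) ⬝ᵥ w = (Θ *ᵥ w) i := by
  refine Finset.sum_congr rfl fun j _ => ?_
  by_cases hj : j ∈ C
  · rw [← hdiff, hrow j hj, sub_zero]
  · rw [hw j hj, mul_zero, mul_zero]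

theorem PosDef.diag_le_and_lt_iff_of_row_sub_eq_vecMul {Θ Θ' : Matrix n n ℝ} (hΘ : Θ.PosDef)
    {C : Finset n} {i : n} {w : n → ℝ} (hw : ∀ l ∉ C, w l = 0)
    (hrow : ∀ j ∈ C, Θ' i j = 0) (hdiff : ∀ j, Θ i j - Θ' i j = (w ᵥ* Θ) j) :
    Θ' i i ≤ Θ i i ∧ (Θ' i i < Θ i i ↔ ∃ j ∈ C, Θ i j ≠ 0) := by
  have hquad : w ⬝ᵥ Θ *ᵥ w = Θ i i - Θ' i i := by
    rw [dotProduct_mulVec, vecMul_dotProduct_eq_mulVec_apply hw hrow hdiff,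
      ← vecMul_transpose, (isHermitian_iff_isSymm.mp hΘ.isHermitian).eq, hdiff]
  have hw_ne : w ≠ 0 ↔ ∃ j ∈ C, Θ i j ≠ 0 := by
    constructor
    · intro hw0
      by_contra! hC
      have : (Θ *ᵥ w) i = 0 := Finset.sum_eq_zero fun j _ => by
        change Θ i j * w j = 0
        by_cases hj : j ∈ C
        · rw [hC j hj, zero_mul]
        · rw [hw j hj, mul_zero]
      have := hΘ.dotProduct_mulVec_pos hw0
      rw [star_trivial, dotProduct_mulVec, vecMul_dotProduct_eq_mulVec_apply hw hrow hdiff] at this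
      linarith
    · rintro ⟨j, hj, hΘij⟩ rfl
      apply hΘij
      simpa [hrow j hj] using hdiff j
  rw [← sub_nonneg, ← sub_pos, ← hquad, ← hw_ne]
  refine ⟨by simpa using hΘ.posSemidef.dotProduct_mulVec_nonneg w, ?_,
    fun hw0 => by simpa using hΘ.dotProduct_mulVec_pos hw0⟩
  rintro hpos rfl
  simp at hpos

theorem PosDef.diag_le_and_lt_iff_of_inv_eq_outside {Θ Θ' : Matrix n n ℝ} (hΘ : Θ.PosDef)
    (hΘ' : IsUnit Θ'.det) {C : Finset n} (hagree : ∀ k ∉ C, ∀ l ∉ C, Θ'⁻¹ k l = Θ⁻¹ k l)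
    {i : n} (hrow : ∀ k ∈ C, Θ' i k = 0) :
    Θ' i i ≤ Θ i i ∧ (Θ' i i < Θ i i ↔ ∃ j ∈ C, Θ i j ≠ 0) := by
  refine hΘ.diag_le_and_lt_iff_of_row_sub_eq_vecMul (w := (Θ' * (Θ'⁻¹ - Θ⁻¹)) i)
    (fun l hl => Finset.sum_eq_zero fun k _ => ?_) hrow fun j => ?_
  · change Θ' i k * (Θ'⁻¹ - Θ⁻¹) k l = 0
    by_cases hk : k ∈ C
    · rw [hrow k hk, zero_mul]
    · rw [sub_apply, hagree k hk l hl, sub_self, mul_zero]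
  · rw [← mul_apply_eq_vecMul, ← sub_eq_mul_inv_sub_inv_mul hΘ.det_pos.ne'.isUnit hΘ', sub_apply]

end Matrix

theorem madgq_diag_distortion_general (p : ℕ) (Θ Θ' : Matrix (Fin p) (Fin p) ℝ)
    (hΘ : Θ.PosDef) (hΘ' : Θ'.PosDef) (A C : Finset (Fin p))
    (hz1 : ∀ i ∈ A, ∀ j ∈ C, Θ' i j = 0)
    (hz2 : ∀ i ∈ C, ∀ j ∈ A, Θ' i j = 0)
    (hagree : ∀ i j : Fin p, ¬((i ∈ A ∧ j ∈ C) ∨ (i ∈ C ∧ j ∈ A)) →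
      Θ'⁻¹ i j = Θ⁻¹ i j) :
    (∀ i ∈ A ∪ C, Θ' i i ≤ Θ i i) ∧
    (∀ i ∈ A, (Θ' i i < Θ i i ↔ ∃ j ∈ C, Θ i j ≠ 0)) ∧
    (∀ j ∈ C, (Θ' j j < Θ j j ↔ ∃ i ∈ A, Θ i j ≠ 0)) := by
  have hdet' := hΘ'.det_pos.ne'.isUnit
  have hA : ∀ i ∈ A, Θ' i i ≤ Θ i i ∧ (Θ' i i < Θ i i ↔ ∃ j ∈ C, Θ i j ≠ 0) := fun i hi =>
    hΘ.diag_le_and_lt_iff_of_inv_eq_outside hdet'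
      (fun k hk l hl => hagree k l (by tauto)) (hz1 i hi)
  have hC : ∀ j ∈ C, Θ' j j ≤ Θ j j ∧ (Θ' j j < Θ j j ↔ ∃ i ∈ A, Θ j i ≠ 0) := fun j hj =>
    hΘ.diag_le_and_lt_iff_of_inv_eq_outside hdet'
      (fun k hk l hl => hagree k l (by tauto)) (hz2 j hj)
  refine ⟨fun i hi => (Finset.mem_union.mp hi).elim (fun h => (hA i h).1) fun h => (hC i h).1,
    fun i hi => (hA i hi).2, fun j hj => ?_⟩
  simp_rw [(hC j hj).2, (isHermitian_iff_isSymm.mp hΘ.isHermitian).apply j]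

/-- In the block completion setting with
`O^c = (A×C) ∪ (C×A)`: the maximum-determinant completion `Θ'` satisfies
`Θ'_{ii} ≤ Θ_{ii}` for all `i ∈ A ∪ C`, with strict inequality for `i ∈ A` iff the
row `Θ_{iC}` is nonzero, and for `j ∈ C` iff the column `Θ_{Aj}` is nonzero. -/
theorem madgq_diag_distortion (p : ℕ) (Θ Θ' : Matrix (Fin p) (Fin p) ℝ)
    (hΘ : Θ.PosDef) (hΘ' : Θ'.PosDef) (A B C : Finset (Fin p))
    (hAB : Disjoint A B) (hAC : Disjoint A C) (hBC : Disjoint B C)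
    (hcover : A ∪ B ∪ C = Finset.univ)
    (hz1 : ∀ i ∈ A, ∀ j ∈ C, Θ' i j = 0)
    (hz2 : ∀ i ∈ C, ∀ j ∈ A, Θ' i j = 0)
    (hagree : ∀ i j : Fin p, ¬((i ∈ A ∧ j ∈ C) ∨ (i ∈ C ∧ j ∈ A)) →
      Θ'⁻¹ i j = Θ⁻¹ i j) :
    (∀ i ∈ A ∪ C, Θ' i i ≤ Θ i i) ∧
    (∀ i ∈ A, (Θ' i i < Θ i i ↔ ∃ j ∈ C, Θ i j ≠ 0)) ∧
    (∀ j ∈ C, (Θ' j j < Θ j j ↔ ∃ i ∈ A, Θ i j ≠ 0)) :=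
  madgq_diag_distortion_general p Θ Θ' hΘ hΘ' A C hz1 hz2 hagree
end

section
/- Complete identifiability: let $\Theta$ be a $p\times p$ positive definite matrix with $\Sigma = \Theta^{-1}$, and let $O \subseteq \{1,\dots,p\}^2$ be symmetric and contain the support of $\Theta$ (i.e. $\Theta_{ij} \neq 0 \Rightarrow (i,j)\in O$). If $\tilde\Theta$ is any positive definite matrix with $\tilde\Theta_{O^c} = 0$ and $[\tilde\Theta^{-1}]_O = \Sigma_O$, then $\tilde\Theta = \Theta$. -/
/-!
Put `A = Θ' - Θ`. Since `Θ'⁻¹ - Θ⁻¹ = -Θ'⁻¹ A Θ⁻¹`, the hypotheses say that `A` is supported in `O`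
while `Θ'⁻¹ A Θ⁻¹` vanishes on `O`, so `tr (A Θ'⁻¹ A Θ⁻¹) = 0`. This is the first-order form of the
strict concavity of `log det`: factoring `Θ'⁻¹ = XᴴX` and `Θ⁻¹ = YYᴴ` turns the trace into
`‖X A Y‖²` in the Frobenius norm, and `X`, `Y` are invertible, so `A = 0`.
-/

open Matrix
open scoped ComplexOrder

namespace Matrix

variable {n : Type*} [Fintype n]

theorem trace_mul_eq_zero_of_isSymm {R : Type*} [NonUnitalNonAssocSemiring R]
    {A B : Matrix n n R} (hB : B.IsSymm) (h : ∀ i j, A i j = 0 ∨ B i j = 0) :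
    (A * B).trace = 0 :=
  Finset.sum_eq_zero fun i _ => Finset.sum_eq_zero fun j _ => by
    rcases h i j with hA | hB' <;> simp [hB.apply, *]

variable [DecidableEq n] {𝕜 : Type*} [RCLike 𝕜]

open scoped MatrixOrder in
theorem eq_zero_of_trace_conjTranspose_mul_mul_mul_eq_zero {A P Q : Matrix n n 𝕜}
    (hP : P.PosDef) (hQ : Q.PosDef) (h : (Aᴴ * P * A * Q).trace = 0) : A = 0 := by
  obtain ⟨X, hX, rfl⟩ := CStarAlgebra.isStrictlyPositive_iff_eq_star_mul_self.mp
    hP.isStrictlyPositive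
  obtain ⟨Y, hY, rfl⟩ := CStarAlgebra.isStrictlyPositive_iff_eq_mul_star_self.mp
    hQ.isStrictlyPositive
  have hXAY : X * A * Y = 0 := by
    rw [← trace_conjTranspose_mul_self_eq_zero_iff, ← h, conjTranspose_mul, conjTranspose_mul,
      mul_assoc, trace_mul_comm]
    simp only [star_eq_conjTranspose, mul_assoc]
  simpa [hX.mul_right_eq_zero, hY.mul_left_eq_zero] using hXAY

theorem PosDef.eq_of_trace_sub_mul_inv_sub_eq_zero {Θ Θ' : Matrix n n 𝕜} (hΘ : Θ.PosDef)
    (hΘ' : Θ'.PosDef) (h : ((Θ' - Θ) * (Θ'⁻¹ - Θ⁻¹)).trace = 0) : Θ' = Θ := by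
  have hunit : IsUnit Θ' ↔ IsUnit Θ := ⟨fun _ => hΘ.isUnit, fun _ => hΘ'.isUnit⟩
  rw [inv_sub_inv hunit, ← neg_sub Θ' Θ, mul_neg, neg_mul, mul_neg, trace_neg, neg_eq_zero] at h
  rw [← sub_eq_zero]
  refine eq_zero_of_trace_conjTranspose_mul_mul_mul_eq_zero hΘ'.inv hΘ.inv ?_
  rw [(hΘ'.isHermitian.sub hΘ.isHermitian).eq]
  simpa only [mul_assoc] using h

end Matrix

theorem complete_identifiability_general (p : ℕ) (Θ Θ' : Matrix (Fin p) (Fin p) ℝ)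
    (hΘ : Θ.PosDef) (hΘ' : Θ'.PosDef) (O : Set (Fin p × Fin p))
    (hsupp : ∀ i j : Fin p, Θ i j ≠ 0 → (i, j) ∈ O)
    (hzero : ∀ i j : Fin p, (i, j) ∉ O → Θ' i j = 0)
    (hinv : ∀ i j : Fin p, (i, j) ∈ O → Θ'⁻¹ i j = Θ⁻¹ i j) :
    Θ' = Θ := by
  refine hΘ.eq_of_trace_sub_mul_inv_sub_eq_zero hΘ' (trace_mul_eq_zero_of_isSymm ?_ fun i j => ?_)
  · exact isHermitian_iff_isSymm.mp (hΘ'.inv.isHermitian.sub hΘ.inv.isHermitian)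
  by_cases hij : (i, j) ∈ O
  · exact Or.inr (sub_eq_zero.mpr (hinv i j hij))
  · have hΘij : Θ i j = 0 := not_not.mp (mt (hsupp i j) hij)
    exact Or.inl (by rw [Matrix.sub_apply, hzero i j hij, hΘij, sub_zero])

/-- **Complete identifiability.** Let `Θ ≻ 0` with `Σ = Θ⁻¹` and let
`O` be a symmetric set of index pairs containing the support of `Θ`.  If `Θ'` is any
positive definite matrix vanishing on `O^c` whose inverse agrees with `Σ` on `O`,
then `Θ' = Θ`. -/
theorem complete_identifiability (p : ℕ) (Θ Θ' : Matrix (Fin p) (Fin p) ℝ)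
    (hΘ : Θ.PosDef) (hΘ' : Θ'.PosDef) (O : Set (Fin p × Fin p))
    (hsym : ∀ i j : Fin p, (i, j) ∈ O → (j, i) ∈ O)
    (hsupp : ∀ i j : Fin p, Θ i j ≠ 0 → (i, j) ∈ O)
    (hzero : ∀ i j : Fin p, (i, j) ∉ O → Θ' i j = 0)
    (hinv : ∀ i j : Fin p, (i, j) ∈ O → Θ'⁻¹ i j = Θ⁻¹ i j) :
    Θ' = Θ :=
  complete_identifiability_general p Θ Θ' hΘ hΘ' O hsupp hzero hinv
end

section
/- Chain graph support bound: let $M$ be a $p\times p$ positive definite matrix and let $k = (\|M\|_0 - p)/2$ denote the number of nonzero strictly-upper-triangular entries (assuming all diagonal entries nonzero). Then the number of nonzero entries of $M^{-1}$ satisfies $\|M^{-1}\|_0 \leq \min\{p^2,\; k^2 + k + p\}$. -/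
open Matrix

open Finset

private lemma walk_pred {V : Type*} {G : SimpleGraph V} {r v : V} (w : G.Walk v r)
    (hne : v ≠ r) : ∃ u, G.Adj v u ∧ G.dist r u + 1 ≤ w.length := by
  cases w with
  | nil => exact absurd rfl hne
  | cons h q =>
      refine ⟨_, h, ?_⟩
      simpa using Nat.add_le_add_right
        ((SimpleGraph.Walk.length_reverse q) ▸ SimpleGraph.dist_le q.reverse) 1

private lemma exists_pred {V : Type*} {G : SimpleGraph V} {r v : V} (h : G.Reachable r v)
    (hne : v ≠ r) : ∃ u, G.Adj u v ∧ G.dist r u < G.dist r v := by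
  obtain ⟨w, hw⟩ := h.exists_walk_length_eq_dist
  obtain ⟨u, hadj, hd⟩ := walk_pred w.reverse hne
  refine ⟨u, hadj.symm, ?_⟩
  rw [SimpleGraph.Walk.length_reverse, hw] at hd
  omega

/-- Inverse entries vanish across connected components. -/
private lemma inv_entry_zero {p : ℕ} {M : Matrix (Fin p) (Fin p) ℝ} (hM : M.PosDef)
    {G : SimpleGraph (Fin p)} (hG : ∀ a b, a ≠ b → M a b ≠ 0 → G.Adj a b)
    {i j : Fin p} (h : ¬ G.Reachable j i) : M⁻¹ i j = 0 := by
  have hsym : ∀ a b, M a b = M b a := fun a b => by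
    simpa using hM.1.apply b a
  have hinvmul : M⁻¹ * M = 1 := Matrix.nonsing_inv_mul M hM.det_pos.ne'.isUnit
  let W : Submodule ℝ (Fin p → ℝ) :=
    { carrier := {v | ∀ t, ¬ G.Reachable j t → v t = 0}
      add_mem' := fun ha hb t ht => by
        simp only [Pi.add_apply, ha t ht, hb t ht, add_zero]
      zero_mem' := fun t ht => rfl
      smul_mem' := fun c v hv t ht => by
        simp only [Pi.smul_apply, hv t ht, smul_zero] }
  have hmap : ∀ v ∈ W, M.mulVecLin v ∈ W := by
    intro v hv t ht
    show (M *ᵥ v) t = 0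
    rw [Matrix.mulVec, dotProduct]
    apply Finset.sum_eq_zero
    intro s _
    by_cases hs : G.Reachable j s
    · by_cases hms : M t s = 0
      · simp [hms]
      · exfalso
        rcases eq_or_ne s t with rfl | hst
        · exact ht hs
        · exact ht (hs.trans (hG s t hst (hsym t s ▸ hms)).reachable)
    · simp [hv s hs]
  have hinj : Function.Injective M.mulVecLin := by
    intro a b hab
    have := congrArg (fun v => M⁻¹ *ᵥ v) hab
    simpa [Matrix.mulVec_mulVec, hinvmul] using this
  have hres : Function.Surjective (M.mulVecLin.restrict hmap) :=
    LinearMap.injective_iff_surjective.mp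
      (fun a b hab => Subtype.ext (hinj (congrArg Subtype.val hab)))
  have hej : (Pi.single j 1 : Fin p → ℝ) ∈ W := by
    intro t ht
    have hne : t ≠ j := by rintro rfl; exact ht (SimpleGraph.Reachable.refl t)
    exact Pi.single_eq_of_ne hne 1
  obtain ⟨w, hw⟩ := hres ⟨Pi.single j 1, hej⟩
  have hw' : M *ᵥ (w : Fin p → ℝ) = Pi.single j 1 := congrArg Subtype.val hw
  have : M⁻¹ *ᵥ (Pi.single j 1 : Fin p → ℝ) = (w : Fin p → ℝ) := by
    rw [← hw', Matrix.mulVec_mulVec, hinvmul, Matrix.one_mulVec]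
  have h0 : (M⁻¹ *ᵥ (Pi.single j 1 : Fin p → ℝ)) i = 0 := by
    rw [this]; exact w.2 i h
  simpa using h0

open Matrix Finset

/-- A connected component with `e` internal edges has at most `e + 1` vertices. -/
private lemma comp_card_le {p : ℕ} (G : SimpleGraph (Fin p)) [DecidableRel G.Adj]
    [DecidableEq G.ConnectedComponent]
    (c : G.ConnectedComponent) (r : Fin p) (hr : G.connectedComponentMk r = c) :
    (univ.filter fun v => G.connectedComponentMk v = c).card ≤
      (univ.filter fun q : Fin p × Fin p =>
        (q.1 < q.2 ∧ G.Adj q.1 q.2) ∧ G.connectedComponentMk q.1 = c).card + 1 := by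
  classical
  set F := univ.filter fun v => G.connectedComponentMk v = c with hF
  have hrF : r ∈ F := by simp [hF, hr]
  have hpred : ∀ v : Fin p, ∃ u, v ∈ F.erase r →
      G.Adj u v ∧ G.dist r u < G.dist r v := by
    intro v
    by_cases hv : v ∈ F.erase r
    · have hvne : v ≠ r := (Finset.mem_erase.mp hv).1
      have hvc : G.connectedComponentMk v = c := by
        have := (Finset.mem_erase.mp hv).2
        simpa [hF] using this
      have hreach : G.Reachable r v :=
        (SimpleGraph.ConnectedComponent.eq).mp (hr.trans hvc.symm)
      obtain ⟨u, hu, hd⟩ := exists_pred hreach hvne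
      exact ⟨u, fun _ => ⟨hu, hd⟩⟩
    · exact ⟨r, fun h => absurd h hv⟩
  choose u hu using hpred
  let φ : Fin p → Fin p × Fin p := fun v => if u v < v then (u v, v) else (v, u v)
  have hmaps : ∀ v ∈ F.erase r, φ v ∈ univ.filter fun q : Fin p × Fin p =>
      (q.1 < q.2 ∧ G.Adj q.1 q.2) ∧ G.connectedComponentMk q.1 = c := by
    intro v hv
    obtain ⟨hadj, _⟩ := hu v hv
    have hvc : G.connectedComponentMk v = c := by
      have := (Finset.mem_erase.mp hv).2
      simpa [hF] using this
    have huc : G.connectedComponentMk (u v) = c := by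
      rw [← hvc]; exact SimpleGraph.ConnectedComponent.eq.mpr hadj.reachable
    have hne : u v ≠ v := hadj.ne
    by_cases hlt : u v < v
    · simp [φ, hlt, hadj, huc]
    · have : v < u v := lt_of_le_of_ne (not_lt.mp hlt) (Ne.symm hne)
      simp [φ, hlt, this, hadj.symm, hvc]
  have hinj : Set.InjOn φ (F.erase r) := by
    intro a ha b hb hab
    by_contra hne
    obtain ⟨hadja, hda⟩ := hu a ha
    obtain ⟨hadjb, hdb⟩ := hu b hb
    have hset : a = u b ∧ u a = b := by
      simp only [φ] at hab
      split_ifs at hab with h1 h2 h2 <;> simp only [Prod.mk.injEq] at hab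
      · exact absurd hab.2 hne
      · exact ⟨hab.2, hab.1⟩
      · exact ⟨hab.1, hab.2⟩
      · exact absurd hab.1 hne
    obtain ⟨h1, h2⟩ := hset
    rw [← h1] at hdb
    rw [h2] at hda
    omega
  have := Finset.card_le_card_of_injOn φ hmaps hinj
  have herase : F.card ≤ (F.erase r).card + 1 := by
    rw [Finset.card_erase_of_mem hrF]
    omega
  omega
/-- Counting pairs in the same connected component. -/
private lemma count_pairs {p : ℕ} (G : SimpleGraph (Fin p)) [DecidableRel G.Adj]
    [DecidableEq G.ConnectedComponent] {k : ℕ}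
    (hk : (univ.filter fun q : Fin p × Fin p => q.1 < q.2 ∧ G.Adj q.1 q.2).card = k) :
    (univ.filter fun q : Fin p × Fin p =>
        G.connectedComponentMk q.1 = G.connectedComponentMk q.2).card ≤ k ^ 2 + k + p := by
  classical
  set f := G.connectedComponentMk with hf
  set C : Finset G.ConnectedComponent := univ.image f with hC
  set n : G.ConnectedComponent → ℕ := fun c => (univ.filter fun v => f v = c).card with hn
  set e : G.ConnectedComponent → ℕ := fun c => (univ.filter fun q : Fin p × Fin p =>
      (q.1 < q.2 ∧ G.Adj q.1 q.2) ∧ f q.1 = c).card with he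
  -- total vertices
  have hverts : ∑ c ∈ C, n c = p := by
    have := Finset.card_eq_sum_card_fiberwise
      (f := f) (s := (univ : Finset (Fin p))) (t := C)
      (fun x _ => Finset.mem_image_of_mem f (Finset.mem_univ x))
    simpa [hn] using this.symm
  -- total edges
  have hedges : ∑ c ∈ C, e c = k := by
    have := Finset.card_eq_sum_card_fiberwise
      (f := fun q : Fin p × Fin p => f q.1)
      (s := univ.filter fun q : Fin p × Fin p => q.1 < q.2 ∧ G.Adj q.1 q.2) (t := C)
      (fun x _ => Finset.mem_image_of_mem f (Finset.mem_univ x.1))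
    rw [hk] at this
    rw [this]
    apply Finset.sum_congr rfl
    intro c _
    simp only [he, Finset.filter_filter]
  -- pairs counted componentwise
  have hpairs : (univ.filter fun q : Fin p × Fin p => f q.1 = f q.2).card
      = ∑ c ∈ C, n c ^ 2 := by
    have h1 := Finset.card_eq_sum_card_fiberwise
      (f := fun q : Fin p × Fin p => f q.1)
      (s := univ.filter fun q : Fin p × Fin p => f q.1 = f q.2) (t := C)
      (fun x _ => Finset.mem_image_of_mem f (Finset.mem_univ x.1))
    rw [h1]
    apply Finset.sum_congr rfl
    intro c _
    have : ((univ.filter fun q : Fin p × Fin p => f q.1 = f q.2).filter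
        fun q => f q.1 = c)
        = (univ.filter fun v => f v = c) ×ˢ (univ.filter fun v => f v = c) := by
      ext q
      simp only [Finset.mem_filter, Finset.mem_product, Finset.mem_univ, true_and]
      constructor
      · rintro ⟨h1, h2⟩; exact ⟨h2, h1 ▸ h2⟩
      · rintro ⟨h1, h2⟩; exact ⟨h1.trans h2.symm, h1⟩
    rw [Finset.filter_filter, ← Finset.filter_filter, this, Finset.card_product, hn, sq]
  -- per-component bound
  have hcomp : ∀ c ∈ C, n c ≤ e c + 1 := by
    intro c hc
    obtain ⟨r, _, hr⟩ := Finset.mem_image.mp hc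
    exact comp_card_le G c r hr
  have hpos : ∀ c ∈ C, 1 ≤ n c := by
    intro c hc
    obtain ⟨r, _, hr⟩ := Finset.mem_image.mp hc
    refine Finset.card_pos.mpr ⟨r, ?_⟩
    simp [hn, hr]
  -- arithmetic
  set m : G.ConnectedComponent → ℕ := fun c => n c - 1 with hm
  have hnm : ∀ c ∈ C, n c = m c + 1 := fun c hc => by
    have := hpos c hc; simp only [hm]; omega
  have hme : ∀ c ∈ C, m c ≤ e c := fun c hc => by
    have h1 := hcomp c hc; have h2 := hpos c hc; simp only [hm]; omega
  have hmsum : ∑ c ∈ C, m c ≤ k := hedges ▸ Finset.sum_le_sum hme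
  have hsq : ∑ c ∈ C, m c ^ 2 ≤ k ^ 2 := by
    calc ∑ c ∈ C, m c ^ 2 ≤ ∑ c ∈ C, m c * (∑ d ∈ C, m d) := by
          apply Finset.sum_le_sum
          intro c hc
          rw [sq]
          exact Nat.mul_le_mul_left _ (Finset.single_le_sum (fun d _ => Nat.zero_le _) hc)
      _ = (∑ c ∈ C, m c) * (∑ d ∈ C, m d) := by rw [← Finset.sum_mul]
      _ ≤ k * k := Nat.mul_le_mul hmsum hmsum
      _ = k ^ 2 := (sq k).symm
  have hexp : ∑ c ∈ C, n c ^ 2 = ∑ c ∈ C, (m c ^ 2 + m c) + ∑ c ∈ C, n c := by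
    rw [← Finset.sum_add_distrib]
    apply Finset.sum_congr rfl
    intro c hc
    rw [hnm c hc]; ring
  rw [hpairs, hexp, hverts, Finset.sum_add_distrib]
  have := hsq
  have := hmsum
  omega

/-- **Chain graph support bound.** Let `M ≻ 0` be `p×p` with all
diagonal entries nonzero, and let `k` be the number of nonzero strictly upper
triangular entries of `M`.  Then the number of nonzero entries of `M⁻¹` is at most
`min { p², k² + k + p }`. -/
theorem l0_inv_le (p : ℕ) (M : Matrix (Fin p) (Fin p) ℝ) (hM : M.PosDef)
    (hdiag : ∀ i, M i i ≠ 0) (k : ℕ)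
    (hk : {q : Fin p × Fin p | q.1 < q.2 ∧ M q.1 q.2 ≠ 0}.ncard = k) :
    {q : Fin p × Fin p | M⁻¹ q.1 q.2 ≠ 0}.ncard ≤ min (p ^ 2) (k ^ 2 + k + p) := by
  classical
  refine le_min ?_ ?_
  · have h1 : {q : Fin p × Fin p | M⁻¹ q.1 q.2 ≠ 0}.ncard ≤
        (Set.univ : Set (Fin p × Fin p)).ncard :=
      Set.ncard_le_ncard (Set.subset_univ _) Set.finite_univ
    have h2 : (Set.univ : Set (Fin p × Fin p)).ncard = p ^ 2 := by
      rw [Set.ncard_univ, Nat.card_eq_fintype_card]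
      simp [sq]
    exact h1.trans h2.le
  · set G := SimpleGraph.fromRel (fun a b : Fin p => M a b ≠ 0) with hGdef
    haveI : DecidableRel G.Adj := fun a b => Classical.dec _
    haveI : DecidableEq G.ConnectedComponent := Classical.decEq _
    have hG : ∀ a b : Fin p, a ≠ b → M a b ≠ 0 → G.Adj a b := by
      intro a b hne hM0
      rw [hGdef, SimpleGraph.fromRel_adj]
      exact ⟨hne, Or.inl hM0⟩
    have hsym : ∀ a b, M a b = M b a := fun a b => by simpa using hM.1.apply b a
    have hE : (univ.filter fun q : Fin p × Fin p => q.1 < q.2 ∧ G.Adj q.1 q.2).card = k := by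
      rw [← hk]
      have hset : {q : Fin p × Fin p | q.1 < q.2 ∧ M q.1 q.2 ≠ 0} =
          ↑(univ.filter fun q : Fin p × Fin p => q.1 < q.2 ∧ G.Adj q.1 q.2) := by
        ext q
        simp only [Set.mem_setOf_eq, Finset.coe_filter, Finset.mem_univ, true_and,
          hGdef, SimpleGraph.fromRel_adj]
        constructor
        · rintro ⟨h1, h2⟩; exact ⟨h1, h1.ne, Or.inl h2⟩
        · rintro ⟨h1, hne, h2 | h2⟩
          · exact ⟨h1, h2⟩
          · exact ⟨h1, hsym q.1 q.2 ▸ h2⟩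
      rw [hset, Set.ncard_coe_finset]
    have hsub : {q : Fin p × Fin p | M⁻¹ q.1 q.2 ≠ 0} ⊆
        ↑(univ.filter fun q : Fin p × Fin p =>
          G.connectedComponentMk q.1 = G.connectedComponentMk q.2) := by
      intro q hq
      simp only [Finset.coe_filter, Set.mem_setOf_eq, Finset.mem_univ, true_and]
      by_contra hcon
      have hnr : ¬ G.Reachable q.2 q.1 := fun h =>
        hcon ((SimpleGraph.ConnectedComponent.eq).mpr h).symm
      exact hq (inv_entry_zero hM hG hnr)
    calc {q : Fin p × Fin p | M⁻¹ q.1 q.2 ≠ 0}.ncard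
        ≤ (↑(univ.filter fun q : Fin p × Fin p =>
            G.connectedComponentMk q.1 = G.connectedComponentMk q.2) :
              Set (Fin p × Fin p)).ncard :=
          Set.ncard_le_ncard hsub (Finset.finite_toSet _)
      _ = (univ.filter fun q : Fin p × Fin p =>
            G.connectedComponentMk q.1 = G.connectedComponentMk q.2).card :=
          Set.ncard_coe_finset _
      _ ≤ k ^ 2 + k + p := count_pairs G hE
end

section
/- Let $\Theta$ be a $p\times p$ positive definite matrix partitioned by disjoint sets $A, B, C$ with $O^c = (A\times C)\cup(C\times A)$, and let $\tilde\Theta$ be the maximum-determinant completion (so $\tilde\Theta_{AA} = \Theta_{AA}-\Theta_{AC}\Theta_{CC}^{-1}\Theta_{CA}$, etc.). With $\gamma = \|\Theta_{AC}\|_\infty$, $\bar\gamma_{CC} = \|\Theta_{CC}^{-1}\|_\infty$ and $\mathrm{rd}_{AC}$ the maximum number of nonzero entries in any row of $\Theta_{AC}$, we have $\|\Theta_{AA} - \tilde\Theta_{AA}\|_\infty \leq \mathrm{rd}_{AC}^2\,\bar\gamma_{CC}\,\gamma^2$. -/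
open Matrix

/-- Elementwise sup-norm of a real matrix: `‖A‖_∞ = max_{i,j} |A i j|`. -/
noncomputable def supNorm {m n : Type*} [Fintype m] [Fintype n]
    (A : Matrix m n ℝ) : ℝ :=
  ⨆ p : m × n, |A p.1 p.2|

/-! Since `Θ'⁻¹` and `Θ⁻¹` agree on the block `Cᶜ × Cᶜ`, eliminating the `C`-block in
`Θ Θ⁻¹ = 1` and in `Θ' Θ'⁻¹ = 1` (where `Θ'_{AC} = 0`) shows that `Θ'_{A,Cᶜ}` is the corresponding
block of the Schur complement `Θ_{·,Cᶜ} - Θ_{·,C} Θ_{CC}⁻¹ Θ_{C,Cᶜ}`. Hence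
`Θ_{AA} - Θ'_{AA} = Θ_{AC} Θ_{CC}⁻¹ Θ_{CA}`, and each entry of this product is a sum of at most
`rd_{AC}²` nonzero terms, each bounded by `γ² γ̄_{CC}`. -/

namespace Matrix

def finsetBlock {m n α : Type*} (M : Matrix m n α) (E : Finset m) (F : Finset n) : Matrix E F α :=
  M.submatrix (↑) (↑)

variable {n : Type*} [DecidableEq n]

theorem finsetBlock_one_self {α : Type*} [Zero α] [One α] (E : Finset n) :
    (1 : Matrix n n α).finsetBlock E E = 1 :=
  submatrix_one _ Subtype.val_injective

variable [Fintype n]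

theorem finsetBlock_one_compl {α : Type*} [Zero α] [One α] (C : Finset n) :
    (1 : Matrix n n α).finsetBlock C Cᶜ = 0 := by
  ext i j
  exact one_apply_ne fun h => Finset.mem_compl.mp j.2 (h ▸ i.2)

theorem finsetBlock_mul_eq_add {l o α : Type*} [NonUnitalNonAssocSemiring α] (M : Matrix l n α)
    (N : Matrix n o α) (E : Finset l) (F : Finset o) (C : Finset n) :
    (M * N).finsetBlock E F =
      M.finsetBlock E C * N.finsetBlock C F + M.finsetBlock E Cᶜ * N.finsetBlock Cᶜ F := by
  ext i j
  simp only [finsetBlock, submatrix_apply, add_apply, mul_apply]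
  rw [← Finset.sum_add_sum_compl C, ← Finset.sum_coe_sort C, ← Finset.sum_coe_sort Cᶜ]

variable {R : Type*} [CommRing R]

theorem schurComplement_mul_finsetBlock_inv {M : Matrix n n R} (hM : IsUnit M.det)
    (E C : Finset n) (hC : IsUnit (M.finsetBlock C C).det) :
    (M.finsetBlock E Cᶜ - M.finsetBlock E C * (M.finsetBlock C C)⁻¹ * M.finsetBlock C Cᶜ) *
      M⁻¹.finsetBlock Cᶜ Cᶜ = (1 : Matrix n n R).finsetBlock E Cᶜ := by
  have hCCc : M.finsetBlock C C * M⁻¹.finsetBlock C Cᶜ +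
      M.finsetBlock C Cᶜ * M⁻¹.finsetBlock Cᶜ Cᶜ = 0 := by
    rw [← finsetBlock_mul_eq_add, mul_nonsing_inv M hM, finsetBlock_one_compl]
  have hinv : M⁻¹.finsetBlock C Cᶜ =
      -((M.finsetBlock C C)⁻¹ * M.finsetBlock C Cᶜ * M⁻¹.finsetBlock Cᶜ Cᶜ) := by
    rw [← nonsing_inv_mul_cancel_left _ (M⁻¹.finsetBlock C Cᶜ) hC, eq_neg_iff_add_eq_zero,
      Matrix.mul_assoc, ← Matrix.mul_add, hCCc, Matrix.mul_zero]
  rw [← mul_nonsing_inv M hM, finsetBlock_mul_eq_add _ _ E Cᶜ C, hinv]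
  simp only [Matrix.sub_mul, Matrix.mul_neg, Matrix.mul_assoc]
  abel

theorem finsetBlock_eq_schurComplement_of_finsetBlock_inv_eq {M M' : Matrix n n R}
    (hM : IsUnit M.det) (hM' : IsUnit M'.det) (E C : Finset n)
    (hC : IsUnit (M.finsetBlock C C).det) (hzero : M'.finsetBlock E C = 0)
    (hinv : M'⁻¹.finsetBlock Cᶜ Cᶜ = M⁻¹.finsetBlock Cᶜ Cᶜ) :
    M'.finsetBlock E Cᶜ =
      M.finsetBlock E Cᶜ - M.finsetBlock E C * (M.finsetBlock C C)⁻¹ * M.finsetBlock C Cᶜ := by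
  have hinvBlock : IsUnit (M⁻¹.finsetBlock Cᶜ Cᶜ).det := by
    refine isUnit_det_of_left_inverse (B := M.finsetBlock Cᶜ Cᶜ -
      M.finsetBlock Cᶜ C * (M.finsetBlock C C)⁻¹ * M.finsetBlock C Cᶜ) ?_
    rw [schurComplement_mul_finsetBlock_inv hM _ C hC, finsetBlock_one_self]
  have hM'BlockInv : M'.finsetBlock E Cᶜ * M⁻¹.finsetBlock Cᶜ Cᶜ =
      (1 : Matrix n n R).finsetBlock E Cᶜ := by
    rw [← hinv, ← mul_nonsing_inv M' hM', finsetBlock_mul_eq_add _ _ E Cᶜ C, hzero,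
      Matrix.zero_mul, zero_add]
  rw [← mul_nonsing_inv_cancel_right _ (M'.finsetBlock E Cᶜ) hinvBlock, hM'BlockInv,
    ← schurComplement_mul_finsetBlock_inv hM E C hC, mul_nonsing_inv_cancel_right _ _ hinvBlock]

end Matrix

section supNorm

open Finset

variable {l m n o : Type*} [Fintype l] [Fintype m] [Fintype n] [Fintype o]

lemma supNorm_nonneg (A : Matrix m n ℝ) : 0 ≤ supNorm A :=
  Real.iSup_nonneg fun _ => abs_nonneg _

lemma abs_apply_le_supNorm (A : Matrix m n ℝ) (i : m) (j : n) : |A i j| ≤ supNorm A :=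
  le_ciSup (f := fun q : m × n => |A q.1 q.2|) (Set.finite_range _).bddAbove (i, j)

lemma supNorm_le {A : Matrix m n ℝ} {c : ℝ} (hc : 0 ≤ c) (h : ∀ i j, |A i j| ≤ c) :
    supNorm A ≤ c :=
  Real.iSup_le (fun q => h q.1 q.2) hc

lemma supNorm_transpose (A : Matrix m n ℝ) : supNorm Aᵀ = supNorm A :=
  (Equiv.prodComm n m).iSup_comp (g := fun q : m × n => |A q.1 q.2|)

lemma abs_sum_mul_le_card_mul {ι : Type*} [Fintype ι] {f g : ι → ℝ} {a b : ℝ}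
    (hf : ∀ k, |f k| ≤ a) (hg : ∀ k, |g k| ≤ b) :
    |∑ k, f k * g k| ≤ #{k | f k ≠ 0} * (a * b) := by
  rw [← sum_filter_of_ne fun k _ h => left_ne_zero_of_mul h]
  calc |∑ k with f k ≠ 0, f k * g k|
      ≤ ∑ k with f k ≠ 0, |f k * g k| := abs_sum_le_sum_abs _ _
    _ ≤ ∑ k with f k ≠ 0, a * b := by
        gcongr with k
        rw [abs_mul]
        exact mul_le_mul (hf k) (hg k) (abs_nonneg _) ((abs_nonneg _).trans (hf k))
    _ = #{k | f k ≠ 0} * (a * b) := by rw [sum_const, nsmul_eq_mul]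

theorem supNorm_mul_mul_le {M : Matrix l m ℝ} {P : Matrix m n ℝ} {Q : Matrix n o ℝ} {r c : ℕ}
    (hM : ∀ i, #{k | M i k ≠ 0} ≤ r) (hQ : ∀ j, #{k | Q k j ≠ 0} ≤ c) :
    supNorm (M * P * Q) ≤ r * c * supNorm M * supNorm P * supNorm Q := by
  have hMP : ∀ i k, |(M * P) i k| ≤ r * (supNorm M * supNorm P) := fun i k =>
    (abs_sum_mul_le_card_mul (abs_apply_le_supNorm M i) (abs_apply_le_supNorm P · k)).trans
      (by gcongr; exacts [mul_nonneg (supNorm_nonneg M) (supNorm_nonneg P), hM i])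
  refine supNorm_le (by positivity [supNorm_nonneg M, supNorm_nonneg P, supNorm_nonneg Q])
    fun i j => ?_
  calc |(M * P * Q) i j| = |∑ k, Q k j * (M * P) i k| := by simp only [mul_apply, mul_comm]
    _ ≤ #{k | Q k j ≠ 0} * (supNorm Q * (r * (supNorm M * supNorm P))) :=
        abs_sum_mul_le_card_mul (abs_apply_le_supNorm Q · j) (hMP i)
    _ ≤ c * (supNorm Q * (r * (supNorm M * supNorm P))) := by
        gcongr
        · positivity [supNorm_nonneg M, supNorm_nonneg P, supNorm_nonneg Q]
        · exact hQ j
    _ = r * c * supNorm M * supNorm P * supNorm Q := by ring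

end supNorm

section

variable {p : ℕ} {Θ Θ' : Matrix (Fin p) (Fin p) ℝ} {A C : Finset (Fin p)}

theorem msub_sub_msub_eq_mul_inv_mul (hΘ : Θ.PosDef) (hΘ' : IsUnit Θ'.det) (hAC : Disjoint A C)
    (hz : ∀ i ∈ A, ∀ j ∈ C, Θ' i j = 0) (hagree : ∀ i ∉ C, ∀ j ∉ C, Θ'⁻¹ i j = Θ⁻¹ i j) :
    msub Θ A A - msub Θ' A A = msub Θ A C * (msub Θ C C)⁻¹ * msub Θ C A := by
  have hblock := finsetBlock_eq_schurComplement_of_finsetBlock_inv_eq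
    ((isUnit_iff_isUnit_det _).mp hΘ.isUnit) hΘ' A C
    ((isUnit_iff_isUnit_det _).mp (hΘ.submatrix Subtype.val_injective).isUnit)
    (by ext i k; exact hz _ i.2 _ k.2)
    (by ext i j; exact hagree _ (Finset.mem_compl.mp i.2) _ (Finset.mem_compl.mp j.2))
  ext i j
  have := congrFun (congrFun hblock i) ⟨j, Finset.mem_compl.mpr (Finset.disjoint_left.mp hAC j.2)⟩
  simp only [finsetBlock, submatrix_apply, Matrix.sub_apply] at this
  change Θ i j - Θ' i j = _
  rw [this, sub_sub_cancel]
  rfl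

open Finset in
lemma card_support_row_msub_le (i : A) :
    #{k | msub Θ A C i k ≠ 0} ≤ A.sup fun i => {j : Fin p | j ∈ C ∧ Θ i j ≠ 0}.ncard := by
  calc #{k | msub Θ A C i k ≠ 0} = {j : Fin p | j ∈ C ∧ Θ i j ≠ 0}.ncard := by
        rw [← Set.ncard_coe_finset, ← Set.ncard_image_of_injective _ Subtype.val_injective]
        congr
        ext j
        simp only [Set.mem_image, Finset.coe_filter, Finset.mem_univ, true_and, Set.mem_ofPred_eq]
        simp [msub, and_comm]
    _ ≤ _ := Finset.le_sup (f := fun i => {j : Fin p | j ∈ C ∧ Θ i j ≠ 0}.ncard) i.2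

end

theorem madgq_AA_distortion_bound_general (p : ℕ) (Θ Θ' : Matrix (Fin p) (Fin p) ℝ)
    (hΘ : Θ.PosDef) (hΘ' : Θ'.PosDef) (A C : Finset (Fin p))
    (hAC : Disjoint A C)
    (hz1 : ∀ i ∈ A, ∀ j ∈ C, Θ' i j = 0)
    (hagree : ∀ i j : Fin p, ¬((i ∈ A ∧ j ∈ C) ∨ (i ∈ C ∧ j ∈ A)) →
      Θ'⁻¹ i j = Θ⁻¹ i j) :
    supNorm (msub Θ A A - msub Θ' A A) ≤
      ((A.sup fun i => {j : Fin p | j ∈ C ∧ Θ i j ≠ 0}.ncard : ℕ) : ℝ) ^ 2 *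
        supNorm ((msub Θ C C)⁻¹) * supNorm (msub Θ A C) ^ 2 := by
  have hCA : msub Θ C A = (msub Θ A C)ᵀ := by
    ext i j
    exact (hΘ.isHermitian.apply i j).symm
  rw [msub_sub_msub_eq_mul_inv_mul hΘ ((isUnit_iff_isUnit_det _).mp hΘ'.isUnit) hAC hz1
    fun i hi j hj => hagree i j (by tauto), hCA]
  refine (supNorm_mul_mul_le (Q := (msub Θ A C)ᵀ) card_support_row_msub_le
    card_support_row_msub_le).trans_eq ?_
  rw [supNorm_transpose]
  ring

/-- With `Θ ≻ 0` partitioned by disjoint `A, B, C` and `Θ'` the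
maximum-determinant completion w.r.t. `O^c = (A×C) ∪ (C×A)`, setting
`γ = ‖Θ_{AC}‖_∞`, `γ̄_CC = ‖Θ_{CC}⁻¹‖_∞` and `rd_AC` the maximum number of nonzero
entries in any row of `Θ_{AC}`, one has
`‖Θ_{AA} - Θ'_{AA}‖_∞ ≤ rd_AC² γ̄_CC γ²`. -/
theorem madgq_AA_distortion_bound (p : ℕ) (Θ Θ' : Matrix (Fin p) (Fin p) ℝ)
    (hΘ : Θ.PosDef) (hΘ' : Θ'.PosDef) (A B C : Finset (Fin p))
    (hAB : Disjoint A B) (hAC : Disjoint A C) (hBC : Disjoint B C)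
    (hcover : A ∪ B ∪ C = Finset.univ)
    (hz1 : ∀ i ∈ A, ∀ j ∈ C, Θ' i j = 0)
    (hz2 : ∀ i ∈ C, ∀ j ∈ A, Θ' i j = 0)
    (hagree : ∀ i j : Fin p, ¬((i ∈ A ∧ j ∈ C) ∨ (i ∈ C ∧ j ∈ A)) →
      Θ'⁻¹ i j = Θ⁻¹ i j) :
    supNorm (msub Θ A A - msub Θ' A A) ≤
      ((A.sup fun i => {j : Fin p | j ∈ C ∧ Θ i j ≠ 0}.ncard : ℕ) : ℝ) ^ 2 *
        supNorm ((msub Θ C C)⁻¹) * supNorm (msub Θ A C) ^ 2 :=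
  madgq_AA_distortion_bound_general p Θ Θ' hΘ hΘ' A C hAC hz1 hagree
end

section
/- Superset property for $K=2$: let $\Theta \succ 0$ be partitioned by disjoint $A, B, C$, and let $\tilde\Theta$ be the maximum-determinant completion with respect to $O^c = (A\times C)\cup(C\times A)$. Define $A^* = \{i\in A : \tilde\Theta_{ii} < \Theta_{ii}\}$ and $C^* = \{j \in C : \tilde\Theta_{jj} < \Theta_{jj}\}$. Then every pair $(i,j) \in A\times C$ with $\Theta_{ij} \neq 0$ belongs to $A^* \times C^*$; i.e., $\{(i,j)\in A\times C : \Theta_{ij}\neq 0\} \subseteq A^*\times C^*$. -/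
/-!
Write `D = Θ'⁻¹ - Θ⁻¹`, which vanishes off `(A × C) ∪ (C × A)`. Then
`Θ - Θ' = Θ' D Θ' + (Θ' D) Θ (D Θ')`. For `i ∈ A` the `i`-th row of `Θ'` vanishes on `C`,
so `(Θ' D Θ')ᵢᵢ = 0` and `Θᵢᵢ - Θ'ᵢᵢ = vᵀ Θ v` with `v` the `i`-th row of `Θ' D`.
Since also `Θ - Θ' = Θ D Θ'`, the `i`-th column of `Θ - Θ'` is `Θ v`; its entry
`Θⱼᵢ - Θ'ⱼᵢ = Θⱼᵢ ≠ 0` forces `v ≠ 0`, and positive definiteness of `Θ` gives `Θ'ᵢᵢ < Θᵢᵢ`.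
The case `j ∈ C` is symmetric.
-/

open Matrix

namespace Matrix

variable {n : Type*} [Fintype n]

theorem dotProduct_mulVec_eq_zero_of_vanishing {α : Type*} [NonUnitalNonAssocSemiring α]
    {D : Matrix n n α} {u : n → α} (S : Set n) (hD : ∀ k l, k ∉ S → l ∉ S → D k l = 0)
    (hu : ∀ k ∈ S, u k = 0) : u ⬝ᵥ D *ᵥ u = 0 := by
  refine Finset.sum_eq_zero fun k _ => ?_
  by_cases hk : k ∈ S
  · simp [hu k hk]
  refine mul_eq_zero_of_right _ (Finset.sum_eq_zero fun l _ => ?_)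
  by_cases hl : l ∈ S
  · simp [hu l hl]
  · simp [hD k l hk hl]

variable [DecidableEq n]

section Algebra

variable {α : Type*} [CommRing α] {M N : Matrix n n α}

theorem mul_inv_sub_inv_mul_eq_sub (hM : IsUnit M.det) (hN : IsUnit N.det) :
    M * (N⁻¹ - M⁻¹) * N = M - N := by
  rw [Matrix.mul_sub, Matrix.sub_mul, nonsing_inv_mul_cancel_right _ _ hN,
    mul_nonsing_inv _ hM, Matrix.one_mul]

theorem sub_eq_mul_inv_sub_inv_mul_add (hM : IsUnit M.det) (hN : IsUnit N.det) :
    M - N = N * (N⁻¹ - M⁻¹) * N + N * (N⁻¹ - M⁻¹) * M * ((N⁻¹ - M⁻¹) * N) := by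
  calc M - N = N * (N⁻¹ - M⁻¹) * (N + M * (N⁻¹ - M⁻¹) * N) := by
        rw [mul_inv_sub_inv_mul_eq_sub hM hN, add_sub_cancel, Matrix.mul_sub,
          Matrix.sub_mul, mul_nonsing_inv _ hN, Matrix.one_mul,
          nonsing_inv_mul_cancel_right _ _ hM]
    _ = _ := by noncomm_ring

end Algebra

theorem lt_of_diag_mul_inv_sub_inv_mul_eq_zero {Θ Θ' : Matrix n n ℝ} (hΘ : Θ.PosDef)
    (hΘ'_symm : Θ'.IsSymm) (hΘ' : IsUnit Θ'.det) {i j : n}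
    (hdiag : (Θ' * (Θ'⁻¹ - Θ⁻¹) * Θ') i i = 0) (hji : Θ' j i ≠ Θ j i) :
    Θ' i i < Θ i i := by
  have hΘ_det : IsUnit Θ.det := isUnit_iff_ne_zero.mpr hΘ.det_pos.ne'
  set D := Θ'⁻¹ - Θ⁻¹
  set v := (Θ' * D) i
  have hcol : (D * Θ')ᵀ i = v := by
    have hD_symm : D.IsSymm :=
      hΘ'_symm.inv.sub (isHermitian_iff_isSymm.mp hΘ.isHermitian).inv
    rw [transpose_mul, hΘ'_symm.eq, hD_symm.eq]
  have hquad : Θ i i - Θ' i i = v ⬝ᵥ Θ *ᵥ v := by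
    have := congrFun₂ (sub_eq_mul_inv_sub_inv_mul_add hΘ_det hΘ') i i
    rwa [sub_apply, add_apply, hdiag, zero_add, mul_mul_apply, hcol] at this
  have hv : v ≠ 0 := by
    intro hv
    have := congrFun₂ (mul_inv_sub_inv_mul_eq_sub hΘ_det hΘ') j i
    rw [Matrix.mul_assoc, mul_apply', sub_apply] at this
    change Θ j ⬝ᵥ (D * Θ')ᵀ i = _ at this
    rw [hcol, hv, dotProduct_zero] at this
    exact hji (by linarith)
  have hpos := hΘ.dotProduct_mulVec_pos hv
  rw [star_trivial] at hpos
  linarith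

end Matrix

theorem madgq_superset_general (p : ℕ) (Θ Θ' : Matrix (Fin p) (Fin p) ℝ)
    (hΘ : Θ.PosDef) (hΘ' : Θ'.PosDef) (A C : Finset (Fin p))
    (hz1 : ∀ i ∈ A, ∀ j ∈ C, Θ' i j = 0)
    (hz2 : ∀ i ∈ C, ∀ j ∈ A, Θ' i j = 0)
    (hagree : ∀ i j : Fin p, ¬((i ∈ A ∧ j ∈ C) ∨ (i ∈ C ∧ j ∈ A)) →
      Θ'⁻¹ i j = Θ⁻¹ i j) :
    ∀ i ∈ A, ∀ j ∈ C, Θ i j ≠ 0 → Θ' i i < Θ i i ∧ Θ' j j < Θ j j := by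
  intro i hi j hj hij
  have hΘ'_symm : Θ'.IsSymm := isHermitian_iff_isSymm.mp hΘ'.isHermitian
  have hΘ'_det : IsUnit Θ'.det := isUnit_iff_ne_zero.mpr hΘ'.det_pos.ne'
  have hdiag (S : Finset (Fin p)) (k : Fin p)
      (hS : ∀ a b, a ∉ S → b ∉ S → ¬((a ∈ A ∧ b ∈ C) ∨ (a ∈ C ∧ b ∈ A)))
      (hk : ∀ l ∈ S, Θ' k l = 0) : (Θ' * (Θ'⁻¹ - Θ⁻¹) * Θ') k k = 0 := by
    rw [mul_mul_apply, hΘ'_symm.eq]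
    exact dotProduct_mulVec_eq_zero_of_vanishing (S : Set (Fin p))
      (fun a b ha hb => sub_eq_zero.2 (hagree a b (hS a b ha hb))) hk
  constructor
  · refine lt_of_diag_mul_inv_sub_inv_mul_eq_zero hΘ hΘ'_symm hΘ'_det
      (hdiag C i (by tauto) (hz1 i hi)) (j := j) ?_
    rw [hz2 j hj i hi, (isHermitian_iff_isSymm.mp hΘ.isHermitian).apply i j]
    exact hij.symm
  · refine lt_of_diag_mul_inv_sub_inv_mul_eq_zero hΘ hΘ'_symm hΘ'_det
      (hdiag A j (by tauto) (hz2 j hj)) (j := i) ?_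
    rw [hz1 i hi j hj]
    exact hij.symm

/-- **Superset property for `K = 2`.** With `Θ ≻ 0` partitioned by
disjoint `A, B, C` and `Θ'` the maximum-determinant completion w.r.t.
`O^c = (A×C) ∪ (C×A)`, every pair `(i,j) ∈ A×C` with `Θ_{ij} ≠ 0` lies in
`A* × C*`, where `A* = {i ∈ A : Θ'_{ii} < Θ_{ii}}`, `C* = {j ∈ C : Θ'_{jj} < Θ_{jj}}`. -/
theorem madgq_superset (p : ℕ) (Θ Θ' : Matrix (Fin p) (Fin p) ℝ)
    (hΘ : Θ.PosDef) (hΘ' : Θ'.PosDef) (A B C : Finset (Fin p))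
    (hAB : Disjoint A B) (hAC : Disjoint A C) (hBC : Disjoint B C)
    (hcover : A ∪ B ∪ C = Finset.univ)
    (hz1 : ∀ i ∈ A, ∀ j ∈ C, Θ' i j = 0)
    (hz2 : ∀ i ∈ C, ∀ j ∈ A, Θ' i j = 0)
    (hagree : ∀ i j : Fin p, ¬((i ∈ A ∧ j ∈ C) ∨ (i ∈ C ∧ j ∈ A)) →
      Θ'⁻¹ i j = Θ⁻¹ i j) :
    ∀ i ∈ A, ∀ j ∈ C, Θ i j ≠ 0 → Θ' i i < Θ i i ∧ Θ' j j < Θ j j :=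
  madgq_superset_general p Θ Θ' hΘ hΘ' A C hz1 hz2 hagree
end
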